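/- (Failure of monotonicity of the high-order scheme.) Let x ∈ ℝ^d, c ∈ ℝ, γ > 0, and let V : ℝ^d → ℝ be any function satisfying V(x) = c, V(x ± h_i e_i) = c, and V(x ± 2h_i e_i) = −c for all i = 1,…,d. Then for every τ ∈ ℝ, V(x) − τ Ĥ_h[V](x) = c − τ H(0, c, x) − τ·(θ − γ h_max^p Σ_{i=1}^d h_i^{-2})·c, where 0 is the zero vector of ℝ^d. Consequently, if c > 0 and γ h_max^p (Σ_{i=1}^d h_i^{-2})·c > H(0, c, x) + θ c, then V(x) − τ Ĥ_h[V](x) > c for every τ > 0, independently of τ: the pseudo-timestep map for the unmodified high-order scheme can exceed the constant supersolution bound c. -/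
import Mathlib


open Finset

/-- Failure of monotonicity of the unmodified high-order scheme: for the
configuration `V(x) = V(x ± hᵢeᵢ) = c`, `V(x ± 2hᵢeᵢ) = −c`, the pseudo-timestep
update satisfies
`V(x) − τ Ĥ_h[V](x) = c − τ H(0,c,x) − τ(θ − γ h_max^p Σᵢ hᵢ⁻²) c` for every `τ`,
hence exceeds the supersolution bound `c` for every `τ > 0` as soon as `c > 0` and
`γ h_max^p (Σᵢ hᵢ⁻²) c > H(0,c,x) + θ c`. -/
theorem high_order_scheme_not_monotone {d : ℕ} (hd : 0 < d)
    (h : Fin d → ℝ) (hh : ∀ i, 0 < h i)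
    (hmax : ℝ) (hhmax : hmax = Finset.univ.sup' ⟨⟨0, hd⟩, Finset.mem_univ _⟩ h)
    (H : (Fin d → ℝ) → ℝ → (Fin d → ℝ) → ℝ)
    (β γ θ p : ℝ) (hβ : 0 ≤ β) (hγ : 0 < γ) (hp : p ∈ Set.Icc (0 : ℝ) 1)
    (x : Fin d → ℝ) (c : ℝ) (V : (Fin d → ℝ) → ℝ)
    (hVx : V x = c)
    (hV1 : ∀ i, V (x + h i • (Pi.single i 1 : Fin d → ℝ)) = c ∧
      V (x - h i • (Pi.single i 1 : Fin d → ℝ)) = c)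
    (hV2 : ∀ i, V (x + (2 * h i) • (Pi.single i 1 : Fin d → ℝ)) = -c ∧
      V (x - (2 * h i) • (Pi.single i 1 : Fin d → ℝ)) = -c) :
    let e : Fin d → (Fin d → ℝ) := fun i => Pi.single i 1
    let Δh : ℝ := ∑ i,
      (V (x + h i • e i) - 2 * V x + V (x - h i • e i)) / (h i) ^ 2
    let Δ2h : ℝ := ∑ i,
      (V (x + (2 * h i) • e i) - 2 * V x + V (x - (2 * h i) • e i)) / (4 * (h i) ^ 2)
    let gradh : Fin d → ℝ := fun i =>
      (V (x + h i • e i) - V (x - h i • e i)) / (2 * h i)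
    let Hh : ℝ := -β * hmax ^ 2 * Δh + H gradh (V x) x + θ * V x
      + γ * hmax ^ p * (Δ2h - Δh)
    (∀ τ : ℝ, V x - τ * Hh
        = c - τ * H 0 c x - τ * (θ - γ * hmax ^ p * ∑ i, ((h i) ^ 2)⁻¹) * c) ∧
    (0 < c → H 0 c x + θ * c < γ * hmax ^ p * (∑ i, ((h i) ^ 2)⁻¹) * c →
      ∀ τ : ℝ, 0 < τ → c < V x - τ * Hh) := by
  intro e Δh Δ2h gradh Hh
  have hΔh : Δh = 0 := by
    apply Finset.sum_eq_zero; intro i _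
    show (V (x + h i • e i) - 2 * V x + V (x - h i • e i)) / (h i) ^ 2 = 0
    rw [(hV1 i).1, (hV1 i).2, hVx]; ring
  have hS : ∀ i, (h i) ^ 2 ≠ 0 := fun i => pow_ne_zero _ (hh i).ne'
  have hΔ2h : Δ2h = -c * ∑ i, ((h i) ^ 2)⁻¹ := by
    show (∑ i, (V (x + (2 * h i) • e i) - 2 * V x + V (x - (2 * h i) • e i)) / (4 * (h i) ^ 2)) = _
    rw [Finset.mul_sum]
    apply Finset.sum_congr rfl; intro i _
    rw [(hV2 i).1, (hV2 i).2, hVx]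
    field_simp
    ring
  have hgrad : gradh = 0 := by
    funext i
    show (V (x + h i • e i) - V (x - h i • e i)) / (2 * h i) = 0
    rw [(hV1 i).1, (hV1 i).2]; simp
  have hHh : Hh = H 0 c x + θ * c - γ * hmax ^ p * (c * ∑ i, ((h i) ^ 2)⁻¹) := by
    show -β * hmax ^ 2 * Δh + H gradh (V x) x + θ * V x + γ * hmax ^ p * (Δ2h - Δh) = _
    rw [hΔh, hΔ2h, hgrad, hVx]; ring
  constructor
  · intro τ; rw [hVx, hHh]; ring
  · intro hc hlt τ hτ
    rw [hVx, hHh]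
    nlinarith
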